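/- Let R be an SDT ring and a ∈ R. If a² ∈ Δ(R), then a ∈ Δ(R). -/
import Mathlib


/-- `Δ(R) = {x ∈ R : x + u ∈ U(R) for every u ∈ U(R)}`. -/
def Delta (R : Type*) [Ring R] : Set R :=
  {x : R | ∀ u : R, IsUnit u → IsUnit (x + u)}

/-- A ring `R` is a strongly Δ tripotent (SDT) ring if every `a ∈ R` can be written
`a = e + d` with `e³ = e`, `d ∈ Δ(R)` and `ed = de`. -/
def IsSDTRing (R : Type*) [Ring R] : Prop :=
  ∀ a : R, ∃ e d : R, e ^ 3 = e ∧ d ∈ Delta R ∧ e * d = d * e ∧ a = e + d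

lemma delta_add {R : Type*} [Ring R] {x y : R} (hx : x ∈ Delta R) (hy : y ∈ Delta R) :
    x + y ∈ Delta R := by
  intro u hu
  have h := hx (y + u) (hy u hu)
  rwa [← add_assoc] at h

lemma delta_neg {R : Type*} [Ring R] {x : R} (hx : x ∈ Delta R) : -x ∈ Delta R := by
  intro u hu
  have h := (hx (-u) hu.neg).neg
  rwa [neg_add, neg_neg] at h

lemma delta_mul_unit {R : Type*} [Ring R] {x v : R} (hx : x ∈ Delta R) (hv : IsUnit v) :
    x * v ∈ Delta R := by
  obtain ⟨v, rfl⟩ := hv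
  intro u hu
  have h := (hx (u * ↑v⁻¹) (hu.mul v⁻¹.isUnit)).mul v.isUnit
  rwa [add_mul, mul_assoc, Units.inv_mul, mul_one] at h

lemma delta_mul {R : Type*} [Ring R] {x y : R} (hx : x ∈ Delta R) (hy : y ∈ Delta R) :
    x * y ∈ Delta R := by
  intro u hu
  obtain ⟨u, rfl⟩ := hu
  set z : R := y * ↑u⁻¹ with hz
  have hzΔ : z ∈ Delta R := delta_mul_unit hy u⁻¹.isUnit
  have hv : IsUnit (x + (-1 : R)) := hx (-1) isUnit_one.neg
  obtain ⟨v, hv⟩ := hv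
  have h1 : IsUnit (z + 1) := hzΔ 1 isUnit_one
  have hc : IsUnit ((↑v⁻¹ : R) * (z + 1)) := v⁻¹.isUnit.mul h1
  have hkey : IsUnit ((↑v : R) * (z + ↑v⁻¹ * (z + 1))) := v.isUnit.mul (hzΔ _ hc)
  have heq : (↑v : R) * (z + ↑v⁻¹ * (z + 1)) = x * z + 1 := by
    rw [mul_add, Units.mul_inv_cancel_left, hv]
    noncomm_ring
  rw [heq] at hkey
  have h2 := hkey.mul u.isUnit
  have heq2 : (x * z + 1) * ↑u = x * y + ↑u := by
    rw [add_mul, one_mul, hz, mul_assoc, Units.inv_mul_cancel_right]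
  rwa [heq2] at h2

theorem mem_delta_of_sq_mem_delta {R : Type*} [Ring R] (hR : IsSDTRing R) (a : R)
    (ha : a ^ 2 ∈ Delta R) : a ∈ Delta R := by
  obtain ⟨e, d, he3, hd, hed, hae⟩ := hR a
  subst hae
  have hcomm : Commute e d := hed
  -- basic identities
  have h4 : e ^ 2 * e ^ 2 = e ^ 2 := by
    rw [← pow_add]
    show e ^ 4 = e ^ 2
    rw [show (4 : ℕ) = 3 + 1 from rfl, pow_succ, he3, ← sq]
  have h5 : e ^ 2 * (e * d) = e * d := by
    rw [← mul_assoc, ← pow_succ, he3]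
  have h6 : (e * d) * e ^ 2 = e * d := by
    rw [mul_assoc, (hcomm.symm.pow_right 2), ← mul_assoc, ← pow_succ', he3]
  have h7 : (e * d) * (e * d) = e ^ 2 * (d * d) := by
    calc (e * d) * (e * d) = e * (d * e) * d := by noncomm_ring
      _ = e * (e * d) * d := by rw [hed]
      _ = e ^ 2 * (d * d) := by noncomm_ring
  -- x = e^2 + 2(ed) ∈ Δ
  have hdd : d * d ∈ Delta R := delta_mul hd hd
  have hsq : ((e + d) ^ 2 : R) = e ^ 2 + 2 * (e * d) + d * d := by
    calc ((e + d) ^ 2 : R) = e * e + (e * d + (d * e + d * d)) := by noncomm_ring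
      _ = e * e + (e * d + (e * d + d * d)) := by rw [hed]
      _ = e ^ 2 + 2 * (e * d) + d * d := by noncomm_ring
  have hx : (e ^ 2 + 2 * (e * d) : R) ∈ Delta R := by
    have h := delta_add ha (delta_neg hdd)
    have heq' : ((e + d) ^ 2 : R) + -(d * d) = e ^ 2 + 2 * (e * d) := by
      rw [hsq]; noncomm_ring
    rwa [heq'] at h
  -- x*x - 2x = e^2 * (4 d d - 1)
  have hXX : ((e ^ 2 + 2 * (e * d)) * (e ^ 2 + 2 * (e * d))
      + (-(e ^ 2 + 2 * (e * d)) + -(e ^ 2 + 2 * (e * d))) : R) ∈ Delta R :=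
    delta_add (delta_mul hx hx) (delta_add (delta_neg hx) (delta_neg hx))
  have hexp : ((e ^ 2 + 2 * (e * d)) * (e ^ 2 + 2 * (e * d)) : R)
      = e ^ 2 * e ^ 2 + 2 * (e ^ 2 * (e * d)) + 2 * ((e * d) * e ^ 2)
        + 4 * ((e * d) * (e * d)) := by noncomm_ring
  have hfac : ((e ^ 2 + 2 * (e * d)) * (e ^ 2 + 2 * (e * d))
      + (-(e ^ 2 + 2 * (e * d)) + -(e ^ 2 + 2 * (e * d))) : R)
      = e ^ 2 * (4 * (d * d) + -1) := by
    rw [hexp, h4, h5, h6, h7]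
    noncomm_ring
  rw [hfac] at hXX
  -- 4 d d - 1 is a unit
  have h4dd : (4 * (d * d) : R) ∈ Delta R := by
    have h := delta_mul (delta_add hd hd) (delta_add hd hd)
    have : ((d + d) * (d + d) : R) = 4 * (d * d) := by noncomm_ring
    rwa [this] at h
  have hu : IsUnit ((4 * (d * d) : R) + -1) := h4dd (-1) isUnit_one.neg
  obtain ⟨v, hv⟩ := hu
  rw [← hv] at hXX
  have he2Δ : (e ^ 2 : R) ∈ Delta R := by
    have h := delta_mul_unit hXX v⁻¹.isUnit
    rwa [Units.mul_inv_cancel_right] at h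
  -- e^2 = 0
  have hunit : IsUnit ((e ^ 2 : R) + -1) := he2Δ (-1) isUnit_one.neg
  obtain ⟨w, hw⟩ := hunit
  have hz : (e ^ 2 : R) * ↑w = 0 := by
    rw [hw, mul_add, h4, mul_neg_one]
    simp
  have he20 : (e ^ 2 : R) = 0 := by
    have := congrArg (· * (↑w⁻¹ : R)) hz
    simpa [mul_assoc] using this
  have he0 : e = 0 := by
    have h : e = e ^ 2 * e := by conv_lhs => rw [← he3, pow_succ]
    rw [h, he20, zero_mul]
  rw [he0, zero_add]
  exact hd
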